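/- Let (d_w)_{w≥1} be a real sequence, d^u > 0 with |d_w| ≤ d^u for all w ≥ 1, and let D be a positive integer with D − 1 ≤ d^u ≤ D. Let c_0 > 0, c_w := (1/w)·Σ_{r=0}^{w−1} d_{w−r}·c_r for w ≥ 1, and c̃_0 := c_0, c̃_w := (1/w)·Σ_{r=0}^{w−1} d^u·c̃_r for w ≥ 1. Let y > 0 and let w_m be a positive integer with w_m ≥ e^{2/e}·y + D. Then the series Σ_{w=w_m}^{∞} (−1)^w·c_w·y^{w+1}/(w+1)! converges absolutely and |Σ_{w=w_m}^{∞} (−1)^w·c_w·y^{w+1}/(w+1)!| ≤ c̃_{D−1}·(1 + π²/6)·y^{w_m+1}/(w_m + 1 − D)!. -/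

import Mathlib

/-!
The coefficients `c_w` are dominated by those of the constant-coefficient recursion, which satisfy
`(w + 1) c̃_{w+1} = (w + d^u) c̃_w`; since `d^u ≤ D` this makes `c̃_w (w + 1 - D)! / (w + 1)!`
non-increasing from `w = D - 1` on. The `k`-th tail term is therefore at most
`c̃_{D-1} y^{w_m+1} / N! · (y / (N + 1))^k` with `N = w_m + 1 - D`, and the choice of `w_m` gives
`y / (N + 1) ≤ e^{-2/e}`. Finally `k ≤ e^{k/e}`, so `e^{-2k/e} ≤ 1/k²` for `k ≥ 1`, and the
majorant sums to `1 + ζ(2)`.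
-/

open Finset Nat Real

section Recursion

variable {d c ct : ℕ → ℝ} {du : ℝ}

theorem abs_le_of_majorant_recursion (hdbd : ∀ w : ℕ, 1 ≤ w → |d w| ≤ du) (h0 : |c 0| ≤ ct 0)
    (hc : ∀ w : ℕ, 1 ≤ w → c w = (1 / (w : ℝ)) * ∑ r ∈ range w, d (w - r) * c r)
    (hct : ∀ w : ℕ, 1 ≤ w → ct w = (1 / (w : ℝ)) * ∑ r ∈ range w, du * ct r) (w : ℕ) :
    |c w| ≤ ct w := by
  induction w using Nat.strong_induction_on with
  | _ w ih =>
    rcases Nat.eq_zero_or_pos w with rfl | hw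
    · exact h0
    rw [hc w hw, hct w hw, abs_mul, abs_of_nonneg (by positivity)]
    gcongr
    refine (abs_sum_le_sum_abs _ _).trans (sum_le_sum fun r hr => ?_)
    have hr := mem_range.mp hr
    have hdr := hdbd (w - r) (by omega)
    rw [abs_mul]
    exact mul_le_mul hdr (ih r hr) (abs_nonneg _) ((abs_nonneg _).trans hdr)

theorem succ_mul_eq_of_const_recursion
    (hct : ∀ w : ℕ, 1 ≤ w → ct w = (1 / (w : ℝ)) * ∑ r ∈ range w, du * ct r) (w : ℕ) :
    ((w : ℝ) + 1) * ct (w + 1) = (w + du) * ct w := by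
  have hsum : ∀ n : ℕ, (n : ℝ) * ct n = du * ∑ r ∈ range n, ct r := by
    intro n
    rcases Nat.eq_zero_or_pos n with rfl | hn
    · simp
    · rw [hct n hn, ← mul_sum]
      field_simp
  have h := hsum (w + 1)
  rw [sum_range_succ, mul_add, ← hsum w] at h
  push_cast at h
  linarith

theorem mul_factorial_sub_le_of_const_recursion {D : ℕ}
    (hct : ∀ w : ℕ, 1 ≤ w → ct w = (1 / (w : ℝ)) * ∑ r ∈ range w, du * ct r)
    (hdu : 0 ≤ du) (hD : du ≤ D) (hctD : 0 ≤ ct (D - 1)) :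
    ∀ w, D - 1 ≤ w → ct w * (w + 1 - D)! ≤ ct (D - 1) * (w + 1)! := by
  refine Nat.le_induction ?_ (fun w hw ih => ?_)
  · gcongr
    omega
  · set m := w + 1 - D with hm
    have hmR : (m : ℝ) = w + 1 - D := by rw [hm, Nat.cast_sub (by omega)]; push_cast; ring
    rw [show w + 1 + 1 - D = m + 1 by omega, factorial_succ (w + 1), factorial_succ m]
    push_cast
    have hrec := succ_mul_eq_of_const_recursion hct w
    -- `(w + d^u)(w + 2 - D) ≤ (w + 1)(w + 2)` because `2D - D² ≤ 1`.
    have hratio : ((w : ℝ) + du) * (m + 1) ≤ (w + 1) * (w + 1 + 1) := by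
      nlinarith [sq_nonneg ((D : ℝ) - 1), mul_le_mul_of_nonneg_right hD (by positivity : (0 : ℝ) ≤ m + 1)]
    have hw1 : (0 : ℝ) < w + 1 := by positivity
    refine le_of_mul_le_mul_left ?_ hw1
    calc ((w : ℝ) + 1) * (ct (w + 1) * ((m + 1) * m !))
        = ((w : ℝ) + du) * (m + 1) * (ct w * m !) := by rw [← mul_assoc, hrec]; ring
      _ ≤ ((w : ℝ) + du) * (m + 1) * (ct (D - 1) * (w + 1)!) := by gcongr
      _ ≤ ((w : ℝ) + 1) * (w + 1 + 1) * (ct (D - 1) * (w + 1)!) := by gcongr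
      _ = ((w : ℝ) + 1) * (ct (D - 1) * ((w + 1 + 1) * (w + 1)!)) := by ring

end Recursion

theorem abs_neg_one_pow_mul_pow_div_factorial_le {a b C y : ℝ} {n m : ℕ} (hab : |a| ≤ b)
    (hb : b * m ! ≤ C * (n + 1)!) (hy : 0 ≤ y) :
    |(-1) ^ n * a * y ^ (n + 1) / (n + 1)!| ≤ C * y ^ (n + 1) / m ! := by
  rw [abs_div, abs_mul, abs_mul, abs_pow, abs_neg, abs_one, one_pow, one_mul,
    abs_of_nonneg (pow_nonneg hy _), Nat.abs_cast, div_le_div_iff₀ (by positivity) (by positivity)]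
  calc |a| * y ^ (n + 1) * m ! ≤ b * m ! * y ^ (n + 1) := by
        rw [mul_right_comm]; gcongr
    _ ≤ C * (n + 1)! * y ^ (n + 1) := by gcongr
    _ = C * y ^ (n + 1) * (n + 1)! := by ring

theorem pow_div_factorial_add_le {y : ℝ} (hy : 0 ≤ y) (N k : ℕ) :
    y ^ k / (N + k)! ≤ (y / (N + 1)) ^ k / N ! := by
  rw [div_pow, div_div]
  gcongr
  exact_mod_cast (mul_comm (N !) _ ▸ Nat.factorial_mul_pow_le_factorial)

theorem le_exp_div_exp_one (t : ℝ) : t ≤ exp (t / exp 1) := by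
  have h := add_one_le_exp (t / exp 1 - 1)
  rw [sub_add_cancel, exp_sub, le_div_iff₀ (exp_pos 1)] at h
  rwa [div_mul_cancel₀ _ (exp_pos 1).ne'] at h

theorem inv_exp_two_div_exp_one_pow_le (k : ℕ) :
    (exp (2 / exp 1) ^ k)⁻¹ ≤ (if k = 0 then 1 else 0) + 1 / (k : ℝ) ^ 2 := by
  rcases Nat.eq_zero_or_pos k with rfl | hk
  · simp
  rw [if_neg hk.ne', zero_add, one_div]
  gcongr
  calc (k : ℝ) ^ 2 ≤ exp (k / exp 1) ^ 2 := by gcongr; exact le_exp_div_exp_one k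
    _ = exp (2 / exp 1) ^ k := by rw [← exp_nat_mul, ← exp_nat_mul]; ring_nf

theorem pow_div_factorial_add_le_of_exp_mul_le {y : ℝ} (hy : 0 ≤ y) {N : ℕ}
    (hyN : exp (2 / exp 1) * y ≤ N + 1) (k : ℕ) :
    y ^ k / (N + k)! ≤ ((if k = 0 then 1 else 0) + 1 / (k : ℝ) ^ 2) / N ! := by
  have hratio : y / (N + 1) ≤ (exp (2 / exp 1))⁻¹ := by
    rw [div_le_iff₀ (by positivity), ← div_eq_inv_mul, le_div_iff₀ (exp_pos _)]
    linarith
  calc y ^ k / (N + k)! ≤ (y / (N + 1)) ^ k / N ! := pow_div_factorial_add_le hy N k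
    _ ≤ (exp (2 / exp 1) ^ k)⁻¹ / N ! := by
        gcongr
        rw [← inv_pow]
        exact pow_le_pow_left₀ (by positivity) hratio k
    _ ≤ _ := by gcongr; exact inv_exp_two_div_exp_one_pow_le k

theorem hasSum_ite_add_one_div_sq :
    HasSum (fun k : ℕ => (if k = 0 then 1 else 0) + 1 / (k : ℝ) ^ 2) (1 + π ^ 2 / 6) :=
  (hasSum_ite_eq 0 1).add hasSum_zeta_two

theorem tail_series_abs_bound_general
    (d : ℕ → ℝ) (du : ℝ) (hdbd : ∀ w : ℕ, 1 ≤ w → |d w| ≤ du)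
    (D : ℕ) (hD2 : du ≤ (D : ℝ))
    (c0 : ℝ) (hc0 : 0 < c0)
    (c ct : ℕ → ℝ) (hcz : c 0 = c0) (hctz : ct 0 = c0)
    (hc : ∀ w : ℕ, 1 ≤ w → c w = (1 / (w : ℝ)) * ∑ r ∈ Finset.range w, d (w - r) * c r)
    (hct : ∀ w : ℕ, 1 ≤ w → ct w = (1 / (w : ℝ)) * ∑ r ∈ Finset.range w, du * ct r)
    (y : ℝ) (hy : 0 < y)
    (wm : ℕ)
    (hwm2 : Real.exp (2 / Real.exp 1) * y + (D : ℝ) ≤ (wm : ℝ)) :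
    Summable (fun w : ℕ =>
      |(-1 : ℝ) ^ (w + wm) * c (w + wm) * y ^ (w + wm + 1) /
        (Nat.factorial (w + wm + 1) : ℝ)|) ∧
    |∑' w : ℕ, (-1 : ℝ) ^ (w + wm) * c (w + wm) * y ^ (w + wm + 1) /
        (Nat.factorial (w + wm + 1) : ℝ)| ≤
      ct (D - 1) * (1 + Real.pi ^ 2 / 6) * y ^ (wm + 1) /
        (Nat.factorial (wm + 1 - D) : ℝ) := by
  have hdu : 0 ≤ du := (abs_nonneg _).trans (hdbd 1 le_rfl)
  have hmaj : ∀ w, |c w| ≤ ct w :=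
    abs_le_of_majorant_recursion hdbd (by rw [hcz, hctz, abs_of_pos hc0]) hc hct
  have hgrowth := mul_factorial_sub_le_of_const_recursion hct hdu hD2 ((abs_nonneg _).trans (hmaj _))
  set N := wm + 1 - D with hN
  set C := ct (D - 1) * y ^ (wm + 1)
  have hC : 0 ≤ C := mul_nonneg ((abs_nonneg _).trans (hmaj _)) (by positivity)
  have hEy : 0 < exp (2 / exp 1) * y := mul_pos (exp_pos _) hy
  have hDwm : D ≤ wm := by exact_mod_cast (by linarith : (D : ℝ) ≤ wm)
  have hyN : exp (2 / exp 1) * y ≤ N + 1 := by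
    rw [hN, Nat.cast_sub (by omega)]
    push_cast
    linarith
  have hterm : ∀ k, |(-1 : ℝ) ^ (k + wm) * c (k + wm) * y ^ (k + wm + 1) / (k + wm + 1)!|
      ≤ C / N ! * ((if k = 0 then 1 else 0) + 1 / (k : ℝ) ^ 2) := by
    intro k
    calc _ ≤ ct (D - 1) * y ^ (k + wm + 1) / (N + k)! :=
          abs_neg_one_pow_mul_pow_div_factorial_le (hmaj _)
            (by simpa only [show k + wm + 1 - D = N + k by omega] using hgrowth (k + wm) (by omega))
            hy.le
      _ = C * (y ^ k / (N + k)!) := by ring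
      _ ≤ C * (((if k = 0 then 1 else 0) + 1 / (k : ℝ) ^ 2) / N !) := by
          gcongr C * ?_
          exact pow_div_factorial_add_le_of_exp_mul_le hy.le hyN k
      _ = _ := by ring
  have hmajorant := hasSum_ite_add_one_div_sq.mul_left (C / N !)
  refine ⟨.of_nonneg_of_le (fun _ => abs_nonneg _) hterm hmajorant.summable, ?_⟩
  calc _ ≤ C / N ! * (1 + π ^ 2 / 6) :=
        tsum_of_norm_bounded hmajorant fun k => (Real.norm_eq_abs _).trans_le (hterm k)
    _ = _ := by ring

/-- Tail bound for the truncated power series: with `|d_w| ≤ d^u` for `w ≥ 1`,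
`D` a positive integer with `D − 1 ≤ d^u ≤ D`, `c_0 > 0`,
`c_w = (1/w)·Σ_{r=0}^{w−1} d_{w−r}·c_r`, `c̃_0 = c_0`,
`c̃_w = (1/w)·Σ_{r=0}^{w−1} d^u·c̃_r`, `y > 0`, and a positive integer
`w_m ≥ e^{2/e}·y + D`: the series `Σ_{w=w_m}^{∞} (−1)^w·c_w·y^{w+1}/(w+1)!`
converges absolutely and its absolute value is at most
`c̃_{D−1}·(1 + π²/6)·y^{w_m+1}/(w_m + 1 − D)!`. -/
theorem tail_series_abs_bound
    (d : ℕ → ℝ) (du : ℝ) (hdu : 0 < du) (hdbd : ∀ w : ℕ, 1 ≤ w → |d w| ≤ du)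
    (D : ℕ) (hD : 1 ≤ D) (hD1 : (D : ℝ) - 1 ≤ du) (hD2 : du ≤ (D : ℝ))
    (c0 : ℝ) (hc0 : 0 < c0)
    (c ct : ℕ → ℝ) (hcz : c 0 = c0) (hctz : ct 0 = c0)
    (hc : ∀ w : ℕ, 1 ≤ w → c w = (1 / (w : ℝ)) * ∑ r ∈ Finset.range w, d (w - r) * c r)
    (hct : ∀ w : ℕ, 1 ≤ w → ct w = (1 / (w : ℝ)) * ∑ r ∈ Finset.range w, du * ct r)
    (y : ℝ) (hy : 0 < y)
    (wm : ℕ) (hwm : 1 ≤ wm)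
    (hwm2 : Real.exp (2 / Real.exp 1) * y + (D : ℝ) ≤ (wm : ℝ)) :
    Summable (fun w : ℕ =>
      |(-1 : ℝ) ^ (w + wm) * c (w + wm) * y ^ (w + wm + 1) /
        (Nat.factorial (w + wm + 1) : ℝ)|) ∧
    |∑' w : ℕ, (-1 : ℝ) ^ (w + wm) * c (w + wm) * y ^ (w + wm + 1) /
        (Nat.factorial (w + wm + 1) : ℝ)| ≤
      ct (D - 1) * (1 + Real.pi ^ 2 / 6) * y ^ (wm + 1) /
        (Nat.factorial (wm + 1 - D) : ℝ) :=
  tail_series_abs_bound_general d du hdbd D hD2 c0 hc0 c ct hcz hctz hc hct y hy wm hwm2
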